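/- Let y₁,…,y_n ∈ ℝ^d and C > 0 be such that (1/n) ∑_{i=1}^n ‖y_i‖² ≤ C, and define the empirical log-likelihood Ψ̂_n(θ) = (1/n) ∑_{i=1}^n log L(y_i,θ). Then for every θ ∈ ℝ^d with ‖θ‖² > 6C one has Ψ̂_n(θ) < Ψ̂_n(0). In particular, every maximizer θ̂ of Ψ̂_n over ℝ^d satisfies ‖θ̂‖² ≤ 6C. -/
import Mathlib


open MeasureTheory
open scoped BigOperators RealInnerProductSpace

noncomputable section

abbrev Euc (d : ℕ) := EuclideanSpace ℝ (Fin d)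
abbrev Iso (d : ℕ) := Euc d ≃ₗᵢ[ℝ] Euc d

/-- The average `H̄ = (1/|H|) ∑_{h∈H} h` of a finite subgroup of linear isometries. -/
def groupAvg {d : ℕ} (H : Subgroup (Iso d)) [Fintype H] : Euc d →ₗ[ℝ] Euc d :=
  (Fintype.card H : ℝ)⁻¹ • ∑ h : H, ((h : Iso d).toLinearEquiv : Euc d →ₗ[ℝ] Euc d)

/-- The density `L(y,θ)` of the Gaussian mixture `P_θ = (1/|G|) ∑_{g∈G} N(gθ, I_d)`
with respect to Lebesgue measure on `ℝ^d`. -/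
def density {d : ℕ} (G : Subgroup (Iso d)) [Fintype G] (y θ : Euc d) : ℝ :=
  (1 / ((Fintype.card G : ℝ) * (2 * Real.pi) ^ ((d : ℝ) / 2))) *
    ∑ g : G, Real.exp (-‖y - (g : Iso d) θ‖ ^ 2 / 2)

/-- The population log-likelihood `Ψ(θ) = ∫ log L(y,θ) · L(y,θ*) dy`. -/
def popLogLik {d : ℕ} (G : Subgroup (Iso d)) [Fintype G] (θstar θ : Euc d) : ℝ :=
  ∫ y : Euc d, Real.log (density G y θ) * density G y θstar

lemma density_pos {d : ℕ} (G : Subgroup (Iso d)) [Fintype G] (y θ : Euc d) :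
    0 < density G y θ := by
  unfold density
  apply mul_pos
  · apply div_pos one_pos
    apply mul_pos
    · exact_mod_cast Fintype.card_pos
    · positivity
  · apply Finset.sum_pos
    · intro g _; positivity
    · exact Finset.univ_nonempty

lemma log_density_le {d : ℕ} (G : Subgroup (Iso d)) [Fintype G] (y θ : Euc d) :
    Real.log (density G y θ) ≤ Real.log (density G y 0) + (‖y‖ * ‖θ‖ - ‖θ‖ ^ 2 / 2) := by
  have key : density G y θ ≤ density G y 0 * Real.exp (‖y‖ * ‖θ‖ - ‖θ‖ ^ 2 / 2) := by
    unfold density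
    rw [mul_assoc, Finset.sum_mul]
    apply mul_le_mul_of_nonneg_left _ (by positivity)
    apply Finset.sum_le_sum
    intro g _
    rw [← Real.exp_add]
    apply Real.exp_le_exp.mpr
    have h0 : (g : Iso d) (0 : Euc d) = 0 := map_zero _
    rw [h0, sub_zero]
    have hsq : ‖y - (g : Iso d) θ‖ ^ 2 = ‖y‖ ^ 2 - 2 * ⟪y, (g : Iso d) θ⟫ + ‖(g : Iso d) θ‖ ^ 2 := by
      exact norm_sub_sq_real _ _
    have hnm : ‖(g : Iso d) θ‖ = ‖θ‖ := (g : Iso d).norm_map θ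
    have hin : ⟪y, (g : Iso d) θ⟫ ≤ ‖y‖ * ‖(g : Iso d) θ‖ := real_inner_le_norm _ _
    rw [hnm] at hsq hin
    nlinarith
  calc Real.log (density G y θ)
      ≤ Real.log (density G y 0 * Real.exp (‖y‖ * ‖θ‖ - ‖θ‖ ^ 2 / 2)) :=
        Real.log_le_log (density_pos G y θ) key
    _ = _ := by
        rw [Real.log_mul (ne_of_gt (density_pos G y 0)) (Real.exp_ne_zero _), Real.log_exp]

/-- If `(1/n) ∑ ‖y_i‖² ≤ C` then the empirical log-likelihood
`Ψ̂_n(θ) = (1/n) ∑ log L(y_i, θ)` satisfies `Ψ̂_n(θ) < Ψ̂_n(0)` whenever `‖θ‖² > 6C`;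
in particular every maximizer `θ̂` of `Ψ̂_n` satisfies `‖θ̂‖² ≤ 6C`. -/
theorem empirical_loglik_bounded_maximizers {d n : ℕ} (G : Subgroup (Iso d)) [Fintype G]
    (hn : 0 < n) (y : Fin n → Euc d) (C : ℝ) (hC : 0 < C)
    (hmean : (1 / (n : ℝ)) * ∑ i, ‖y i‖ ^ 2 ≤ C) :
    (∀ θ : Euc d, ‖θ‖ ^ 2 > 6 * C →
      (1 / (n : ℝ)) * ∑ i, Real.log (density G (y i) θ) <
        (1 / (n : ℝ)) * ∑ i, Real.log (density G (y i) 0)) ∧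
    (∀ θhat : Euc d,
      (∀ θ : Euc d, (1 / (n : ℝ)) * ∑ i, Real.log (density G (y i) θ) ≤
        (1 / (n : ℝ)) * ∑ i, Real.log (density G (y i) θhat)) →
      ‖θhat‖ ^ 2 ≤ 6 * C) := by
  have hn' : (0:ℝ) < n := by exact_mod_cast hn
  have key : ∀ θ : Euc d, ‖θ‖ ^ 2 > 6 * C →
      (1 / (n : ℝ)) * ∑ i, Real.log (density G (y i) θ) <
        (1 / (n : ℝ)) * ∑ i, Real.log (density G (y i) 0) := by
    intro θ hθ
    have hsum : ∑ i, Real.log (density G (y i) θ) ≤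
        ∑ i, (Real.log (density G (y i) 0) + (‖y i‖ ^ 2 - ‖θ‖ ^ 2 / 4)) := by
      apply Finset.sum_le_sum
      intro i _
      have h1 := log_density_le G (y i) θ
      nlinarith [sq_nonneg (‖y i‖ - ‖θ‖ / 2)]
    rw [Finset.sum_add_distrib, Finset.sum_sub_distrib, Finset.sum_const,
      Finset.card_univ, Fintype.card_fin, nsmul_eq_mul] at hsum
    have h2 : (1 / (n : ℝ)) * ∑ i, Real.log (density G (y i) θ) ≤
        (1 / (n : ℝ)) * ∑ i, Real.log (density G (y i) 0) +
          (1 / (n : ℝ)) * ∑ i, ‖y i‖ ^ 2 - ‖θ‖ ^ 2 / 4 := by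
      have := mul_le_mul_of_nonneg_left hsum (le_of_lt (one_div_pos.mpr hn'))
      have hcanc : (1 / (n : ℝ)) * ((n : ℝ) * (‖θ‖ ^ 2 / 4)) = ‖θ‖ ^ 2 / 4 := by
        field_simp
      nlinarith [this]
    nlinarith
  refine ⟨key, ?_⟩
  intro θhat hmax
  by_contra h
  push_neg at h
  have h1 := key θhat h
  have h2 := hmax 0
  linarith
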